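/- Let c₂ = ∑_{l=1}^∞ 2^{−l}·l·ln l and S = c₂/ln 2. For every ε > 0 there exist d₀ > 0 and κ < ∞ such that for all 0 < d < d₀, with ℓ = ⌊8/d⌋: | ∑_{l=1}^{ℓ} 2^{−l}·2^{d(l log₂ l − S l/2)} − 1 | ≤ κ·d^{2−ε}. -/

import Mathlib

/-- `c₂ = ∑_{l≥1} 2^{-l} l ln l`. -/
noncomputable def c2 : ℝ := ∑' l : ℕ+, (2 : ℝ) ^ (-((l : ℕ) : ℤ)) * (l : ℝ) * Real.log (l : ℝ)

/-- `S = c₂ / ln 2`. -/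
noncomputable def Sconst : ℝ := c2 / Real.log 2

/-!
Write the summand as `2⁻ˡ · exp (d · a l)` with `a l = l ln l − c₂ l / 2`. The choice of `c₂`
makes `∑ₗ 2⁻ˡ a l = 0`, so the linearization `2⁻ˡ (1 + d · a l)` sums to exactly `2` over
`l ≥ 0`, while the `l = 0` summand is `1`. The error therefore splits into
* the Taylor remainders for `l ≤ ⌊c/d⌋`, each at most `2⁻ˡ (d · a l)² e^{d |a l|}`; once
  `d ln (1/d)` is small, `d |a l| ≤ l (ln 2)/2` on this range, so they sum to
  `O(d² ∑ l⁴ 2^{-l/2}) = O(d²)`;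
* the tail of the linearization beyond `⌊c/d⌋`, which is `O(⌊c/d⌋⁻²) = O(d²)` because
  `∑ₗ l⁴ 2⁻ˡ < ∞`.
This gives `O(d²)`, which is at most `d^{2-ε}` for `d ≤ 1`.
-/

open Real Filter Topology Finset Asymptotics

theorem abs_exp_sub_one_sub_le_sq_mul_exp_abs (x : ℝ) : |exp x - 1 - x| ≤ x ^ 2 * exp |x| := by
  have h1 : x + 1 ≤ exp x := add_one_le_exp x
  have h2 : -x + 1 ≤ exp (-x) := add_one_le_exp (-x)
  have hinv : exp (-x) * exp x = 1 := by rw [← exp_add]; simp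
  have hp := exp_pos x
  have hp' := exp_pos (-x)
  rw [abs_of_nonneg (by linarith)]
  rcases le_total 0 x with hx | hx
  · rw [abs_of_nonneg hx]
    nlinarith [mul_nonneg (sq_nonneg x) hp.le]
  · rw [abs_of_nonpos hx]
    have h4 : 1 ≤ exp (-x) := by nlinarith
    nlinarith [mul_nonneg (sq_nonneg x) hp'.le]

theorem tsum_nat_add_le_tsum_pow_mul_div {g : ℕ → ℝ} (hg : ∀ l, 0 ≤ g l) {k : ℕ}
    (hk : Summable fun l : ℕ => (l : ℝ) ^ k * g l) {N : ℕ} (hN : 0 < N) :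
    ∑' i, g (i + N) ≤ (∑' l : ℕ, (l : ℝ) ^ k * g l) / N ^ k := by
  have hNk : (0 : ℝ) < (N : ℝ) ^ k := by positivity
  have hshift : Summable fun i => ((i + N : ℕ) : ℝ) ^ k * g (i + N) :=
    (summable_nat_add_iff N).2 hk
  have hterm (i : ℕ) : g (i + N) ≤ ((i + N : ℕ) : ℝ) ^ k * g (i + N) / N ^ k := by
    rw [le_div_iff₀ hNk, mul_comm]
    exact mul_le_mul_of_nonneg_right (pow_le_pow_left₀ (by positivity) (by simp) k) (hg _)
  calc ∑' i, g (i + N)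
      ≤ ∑' i, ((i + N : ℕ) : ℝ) ^ k * g (i + N) / N ^ k :=
        Summable.tsum_le_tsum hterm
          ((hshift.div_const _).of_nonneg_of_le (fun i => hg _) hterm) (hshift.div_const _)
    _ = (∑' i, ((i + N : ℕ) : ℝ) ^ k * g (i + N)) / N ^ k := tsum_div_const
    _ ≤ (∑' l : ℕ, (l : ℝ) ^ k * g l) / N ^ k := by
        refine div_le_div_of_nonneg_right ?_ hNk.le
        exact tsum_comp_le_tsum_of_inj hk (fun l => mul_nonneg (by positivity) (hg l))
          (add_left_injective N)

theorem eventually_mul_sub_log_lt (c : ℝ) {δ : ℝ} (hδ : 0 < δ) :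
    ∀ᶠ d in 𝓝 (0 : ℝ), d * (c - log d) < δ := by
  have hcont : Continuous fun d : ℝ => d * c - d * log d :=
    (continuous_id.mul continuous_const).sub continuous_mul_log
  have hlim : Tendsto (fun d : ℝ => d * (c - log d)) (𝓝 0) (𝓝 0) := by
    simpa [mul_sub] using hcont.tendsto 0
  exact hlim.eventually (gt_mem_nhds hδ)

theorem sum_Icc_sub_one_eq {W f : ℕ → ℝ} (hW : W 0 = 1) (hf : HasSum f 2) (L : ℕ) :
    ∑ l ∈ Icc 1 L, W l - 1 = ∑ l ∈ range (L + 1), (W l - f l) - ∑' i, f (i + (L + 1)) := by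
  have hW' : ∑ l ∈ range (L + 1), W l = W 0 + ∑ l ∈ Icc 1 L, W l := by
    rw [range_eq_Ico, sum_eq_sum_Ico_succ_bot (Nat.succ_pos L)]
    rfl
  have hf' := hf.summable.sum_add_tsum_nat_add (L + 1)
  rw [hf.tsum_eq] at hf'
  rw [sum_sub_distrib]
  linarith

theorem inv_two_pow_mul_exp_half_log_two (l : ℕ) :
    (2⁻¹ : ℝ) ^ l * exp (l * (log 2 / 2)) = exp (-(log 2 / 2) * l) := by
  rw [show (2⁻¹ : ℝ) = exp (-log 2) by rw [exp_neg, exp_log two_pos], ← exp_nat_mul, ← exp_add]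
  ring_nf

theorem natCast_mul_log_mem_Icc (l : ℕ) : (l : ℝ) * log l ∈ Set.Icc 0 ((l : ℝ) ^ 2) :=
  ⟨mul_nonneg l.cast_nonneg (log_natCast_nonneg l), by
    rw [sq]; exact mul_le_mul_of_nonneg_left (log_le_self l.cast_nonneg) l.cast_nonneg⟩

theorem hasSum_c2 : HasSum (fun l : ℕ => (2⁻¹ : ℝ) ^ l * (l * log l)) c2 := by
  have hs : Summable fun l : ℕ => (2⁻¹ : ℝ) ^ l * (l * log l) :=
    (summable_pow_mul_geometric_of_norm_lt_one (r := (2⁻¹ : ℝ)) 2 (by norm_num)).of_nonneg_of_le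
      (fun l => mul_nonneg (by positivity) (natCast_mul_log_mem_Icc l).1)
      (fun l => by
        rw [mul_comm]
        exact mul_le_mul_of_nonneg_right (natCast_mul_log_mem_Icc l).2 (by positivity))
  convert hs.hasSum using 1
  rw [c2, tsum_pnat_eq_tsum_of_eq_zero (f := fun l : ℕ => (2 : ℝ) ^ (-(l : ℤ)) * l * log l)
    (by simp)]
  congr 1 with l
  rw [zpow_neg, zpow_natCast, inv_pow, mul_assoc]

theorem c2_nonneg : 0 ≤ c2 :=
  hasSum_c2.nonneg fun l => mul_nonneg (by positivity) (natCast_mul_log_mem_Icc l).1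

noncomputable def tilt (l : ℕ) : ℝ := l * log l - c2 * l / 2

/-- The unnormalized optimal weight `q*(l) / B(d)`; thus `B(d)⁻¹` is its sum over
`1 ≤ l ≤ ⌊8/d⌋`. -/
noncomputable def runLengthWeight (d : ℝ) (l : ℕ) : ℝ :=
  (2 : ℝ) ^ (-(l : ℝ)) * (2 : ℝ) ^ (d * ((l : ℝ) * logb 2 l - Sconst * l / 2))

theorem runLengthWeight_eq (d : ℝ) (l : ℕ) :
    runLengthWeight d l = (2⁻¹ : ℝ) ^ l * exp (d * tilt l) := by
  have hlog2 : log 2 ≠ 0 := by positivity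
  rw [runLengthWeight, rpow_neg zero_le_two, rpow_natCast, inv_pow, rpow_def_of_pos two_pos]
  congr 2
  rw [tilt, Sconst, logb]
  field_simp

theorem runLengthWeight_zero_right (d : ℝ) : runLengthWeight d 0 = 1 := by
  simp [runLengthWeight_eq, tilt]

theorem hasSum_inv_two_pow_mul_tilt : HasSum (fun l => (2⁻¹ : ℝ) ^ l * tilt l) 0 := by
  have hlin := (hasSum_coe_mul_geometric_of_norm_lt_one (𝕜 := ℝ) (r := 2⁻¹)
    (by norm_num)).mul_left (c2 / 2)
  have hfun : (fun l => (2⁻¹ : ℝ) ^ l * tilt l) =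
      fun l : ℕ => (2⁻¹ : ℝ) ^ l * (l * log l) - c2 / 2 * (l * 2⁻¹ ^ l) := by
    funext l; unfold tilt; ring
  rw [hfun, show (0 : ℝ) = c2 - c2 / 2 * (2⁻¹ / (1 - 2⁻¹) ^ 2) by norm_num]
  exact hasSum_c2.sub hlin

theorem hasSum_inv_two_pow_mul_one_add_mul_tilt (d : ℝ) :
    HasSum (fun l => (2⁻¹ : ℝ) ^ l * (1 + d * tilt l)) 2 := by
  convert (hasSum_geometric_of_lt_one (r := 2⁻¹) (by norm_num) (by norm_num)).add
    (hasSum_inv_two_pow_mul_tilt.mul_left d) using 1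
  · ext l; ring
  · norm_num

theorem abs_tilt_le (l : ℕ) : |tilt l| ≤ l * (log l + c2 / 2) := by
  have := log_natCast_nonneg l
  have := c2_nonneg
  rw [tilt, abs_le]
  constructor <;> nlinarith [l.cast_nonneg (α := ℝ)]

theorem abs_tilt_le_sq (l : ℕ) : |tilt l| ≤ (1 + c2) * l ^ 2 := by
  have hl : (l : ℝ) ≤ l ^ 2 := by
    rcases l.eq_zero_or_pos with rfl | h
    · simp
    · exact_mod_cast Nat.le_self_pow two_ne_zero l
  have := (natCast_mul_log_mem_Icc l).2
  have := c2_nonneg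
  nlinarith [abs_tilt_le l]

theorem mul_abs_tilt_le {c d : ℝ} (hc : 0 < c) (hd : 0 < d)
    (hsmall : d * (log c + c2 / 2 - log d) ≤ log 2 / 2) {l : ℕ} (hl : (l : ℝ) ≤ c / d) :
    d * |tilt l| ≤ l * (log 2 / 2) := by
  rcases l.eq_zero_or_pos with rfl | hl0
  · simp [tilt]
  have hl1 : (1 : ℝ) ≤ l := by exact_mod_cast hl0
  have hlog : log l ≤ log c - log d := by
    rw [← log_div hc.ne' hd.ne']
    exact log_le_log (by linarith) hl
  calc d * |tilt l| ≤ d * (l * (log l + c2 / 2)) := by gcongr; exact abs_tilt_le l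
    _ = l * (d * (log l + c2 / 2)) := by ring
    _ ≤ l * (d * (log c + c2 / 2 - log d)) := by gcongr; linarith
    _ ≤ l * (log 2 / 2) := by gcongr

theorem abs_runLengthWeight_sub_le {d : ℝ} (hd : 0 ≤ d) {l : ℕ}
    (hl : d * |tilt l| ≤ l * (log 2 / 2)) :
    |runLengthWeight d l - (2⁻¹ : ℝ) ^ l * (1 + d * tilt l)| ≤
      d ^ 2 * ((1 + c2) ^ 2 * (l ^ 4 * exp (-(log 2 / 2) * l))) := by
  set x := d * tilt l
  have hexp : exp |x| ≤ exp (l * (log 2 / 2)) := by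
    rw [exp_le_exp, abs_mul, abs_of_nonneg hd]; exact hl
  have hsq : x ^ 2 ≤ d ^ 2 * ((1 + c2) * l ^ 2) ^ 2 := by
    rw [mul_pow, ← sq_abs (tilt l)]
    gcongr
    exact abs_tilt_le_sq l
  rw [runLengthWeight_eq, ← mul_sub, abs_mul, abs_of_pos (by positivity),
    ← inv_two_pow_mul_exp_half_log_two]
  calc (2⁻¹ : ℝ) ^ l * |exp x - (1 + x)|
      ≤ (2⁻¹ : ℝ) ^ l * (x ^ 2 * exp (l * (log 2 / 2))) := by
        rw [← sub_sub]
        gcongr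
        exact (abs_exp_sub_one_sub_le_sq_mul_exp_abs x).trans (by gcongr)
    _ ≤ (2⁻¹ : ℝ) ^ l * (d ^ 2 * ((1 + c2) * l ^ 2) ^ 2 * exp (l * (log 2 / 2))) := by
        gcongr
    _ = _ := by ring

theorem abs_sum_range_runLengthWeight_sub_le {c d : ℝ} (hc : 0 < c) (hd : 0 < d)
    (hsmall : d * (log c + c2 / 2 - log d) ≤ log 2 / 2) :
    |∑ l ∈ range (⌊c / d⌋₊ + 1), (runLengthWeight d l - (2⁻¹ : ℝ) ^ l * (1 + d * tilt l))| ≤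
      (1 + c2) ^ 2 * (∑' l : ℕ, (l : ℝ) ^ 4 * exp (-(log 2 / 2) * l)) * d ^ 2 := by
  have hsum := summable_pow_mul_exp_neg_nat_mul 4 (r := log 2 / 2) (by positivity)
  calc _ ≤ ∑ l ∈ range (⌊c / d⌋₊ + 1),
        d ^ 2 * ((1 + c2) ^ 2 * (l ^ 4 * exp (-(log 2 / 2) * l))) := by
        refine (abs_sum_le_sum_abs _ _).trans (sum_le_sum fun l hl => ?_)
        refine abs_runLengthWeight_sub_le hd.le (mul_abs_tilt_le hc hd hsmall ?_)
        have hlL : l ≤ ⌊c / d⌋₊ := Nat.lt_succ_iff.1 (mem_range.1 hl)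
        exact (Nat.cast_le.2 hlL).trans (Nat.floor_le (by positivity))
    _ = d ^ 2 * (1 + c2) ^ 2 *
          ∑ l ∈ range (⌊c / d⌋₊ + 1), (l : ℝ) ^ 4 * exp (-(log 2 / 2) * l) := by
        rw [mul_sum]; congr 1 with l; ring
    _ ≤ d ^ 2 * (1 + c2) ^ 2 * ∑' l : ℕ, (l : ℝ) ^ 4 * exp (-(log 2 / 2) * l) := by
        gcongr
        exact hsum.sum_le_tsum _ fun l _ => by positivity
    _ = _ := by ring

theorem abs_tsum_nat_add_le {d : ℝ} (hd0 : 0 ≤ d) (hd1 : d ≤ 1) {N : ℕ} (hN : 0 < N) :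
    |∑' i, (2⁻¹ : ℝ) ^ (i + N) * (1 + d * tilt (i + N))| ≤
      (2 + c2) * (∑' l : ℕ, (l : ℝ) ^ 4 * (2⁻¹ : ℝ) ^ l) / N ^ 2 := by
  have hc2 := c2_nonneg
  set g : ℕ → ℝ := fun l => (2 + c2) * ((l : ℝ) ^ 2 * (2⁻¹ : ℝ) ^ l)
  have hg : Summable g :=
    (summable_pow_mul_geometric_of_norm_lt_one (r := (2⁻¹ : ℝ)) 2 (by norm_num)).mul_left _
  have hg2 : Summable fun l : ℕ => (l : ℝ) ^ 2 * g l := by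
    refine ((summable_pow_mul_geometric_of_norm_lt_one (r := (2⁻¹ : ℝ)) 4
      (by norm_num)).mul_left (2 + c2)).congr fun l => ?_
    simp only [g]
    ring
  have hbound (i : ℕ) : ‖(2⁻¹ : ℝ) ^ (i + N) * (1 + d * tilt (i + N))‖ ≤ g (i + N) := by
    have hl : (1 : ℝ) ≤ ((i + N : ℕ) : ℝ) ^ 2 := one_le_pow₀ (by exact_mod_cast (by omega))
    have ht : |1 + d * tilt (i + N)| ≤ (2 + c2) * ((i + N : ℕ) : ℝ) ^ 2 :=
      calc |1 + d * tilt (i + N)| ≤ 1 + d * |tilt (i + N)| := by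
            simpa [abs_mul, abs_of_nonneg hd0] using abs_add_le 1 (d * tilt (i + N))
        _ ≤ 1 + 1 * ((1 + c2) * ((i + N : ℕ) : ℝ) ^ 2) := by
            gcongr; exact abs_tilt_le_sq _
        _ ≤ (2 + c2) * ((i + N : ℕ) : ℝ) ^ 2 := by linarith
    rw [Real.norm_eq_abs, abs_mul, abs_of_pos (by positivity)]
    calc (2⁻¹ : ℝ) ^ (i + N) * |1 + d * tilt (i + N)|
        ≤ (2⁻¹ : ℝ) ^ (i + N) * ((2 + c2) * ((i + N : ℕ) : ℝ) ^ 2) := by gcongr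
      _ = g (i + N) := by simp only [g]; ring
  calc _ ≤ ∑' i, g (i + N) := by
        simpa using tsum_of_norm_bounded ((summable_nat_add_iff N).2 hg).hasSum hbound
    _ ≤ (∑' l : ℕ, (l : ℝ) ^ 2 * g l) / N ^ 2 :=
        tsum_nat_add_le_tsum_pow_mul_div (fun l => by positivity) hg2 hN
    _ = _ := by
        rw [← tsum_mul_left]
        congr 2 with l
        ring

theorem isBigO_sum_runLengthWeight_sub_one {c : ℝ} (hc : 0 < c) :
    (fun d => ∑ l ∈ Icc 1 ⌊c / d⌋₊, runLengthWeight d l - 1) =O[𝓝[>] 0] fun d => d ^ 2 := by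
  set K := ∑' l : ℕ, (l : ℝ) ^ 4 * exp (-(log 2 / 2) * l)
  set K' := ∑' l : ℕ, (l : ℝ) ^ 4 * (2⁻¹ : ℝ) ^ l
  have hK' : 0 ≤ K' := tsum_nonneg fun l => by positivity
  refine IsBigO.of_bound ((1 + c2) ^ 2 * K + (2 + c2) * K' / c ^ 2) ?_
  filter_upwards [nhdsWithin_le_nhds (eventually_mul_sub_log_lt (log c + c2 / 2)
    (by positivity : (0 : ℝ) < log 2 / 2)), Ioo_mem_nhdsGT one_pos] with d hsmall ⟨hd0, hd1⟩
  have hN : c / d < (⌊c / d⌋₊ + 1 : ℕ) := by exact_mod_cast Nat.lt_floor_add_one (c / d)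
  have htail : (2 + c2) * K' / (⌊c / d⌋₊ + 1 : ℕ) ^ 2 ≤ (2 + c2) * K' / c ^ 2 * d ^ 2 := by
    rw [div_mul_eq_mul_div, div_le_div_iff₀ (by positivity) (by positivity)]
    have : c ^ 2 ≤ ((⌊c / d⌋₊ + 1 : ℕ) * d) ^ 2 := by
      gcongr; exact ((div_lt_iff₀ hd0).1 hN).le
    have := mul_le_mul_of_nonneg_left this
      (mul_nonneg (by linarith [c2_nonneg]) hK' : (0 : ℝ) ≤ (2 + c2) * K')
    linarith
  rw [Real.norm_eq_abs, Real.norm_eq_abs, abs_of_nonneg (sq_nonneg d),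
    sum_Icc_sub_one_eq (runLengthWeight_zero_right d) (hasSum_inv_two_pow_mul_one_add_mul_tilt d)]
  calc _ ≤ _ := abs_sub _ _
    _ ≤ (1 + c2) ^ 2 * K * d ^ 2 + (2 + c2) * K' / c ^ 2 * d ^ 2 :=
        add_le_add (abs_sum_range_runLengthWeight_sub_le hc hd0 hsmall.le)
          ((abs_tsum_nat_add_le hd0.le hd1.le (Nat.succ_pos _)).trans htail)
    _ = _ := by ring

/-- Normalization estimate `B(d) = 1 + O(d^{2-ε})` from the proof of Lemma 5:
`|∑_{l=1}^{⌊8/d⌋} 2^{-l}·2^{d(l log₂ l − S l/2)} − 1| ≤ κ·d^{2−ε}` for small `d`. -/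
theorem stmt_16 :
    ∀ ε : ℝ, 0 < ε →
      ∃ d₀ : ℝ, 0 < d₀ ∧ ∃ κ : ℝ,
        ∀ d : ℝ, 0 < d → d < d₀ →
          |(∑ l ∈ Finset.Icc 1 (Nat.floor (8 / d)),
              (2 : ℝ) ^ (-(l : ℝ)) *
                (2 : ℝ) ^ (d * ((l : ℝ) * Real.logb 2 (l : ℝ) - Sconst * (l : ℝ) / 2))) - 1| ≤
            κ * d ^ (2 - ε) := by
  intro ε hε
  obtain ⟨κ, hκ, hbound⟩ := (isBigO_sum_runLengthWeight_sub_one (c := 8) (by norm_num)).exists_pos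
  obtain ⟨d₀, hd₀, hsub⟩ := mem_nhdsGT_iff_exists_Ioo_subset.1
    (hbound.bound.and (Ioo_mem_nhdsGT one_pos))
  refine ⟨d₀, hd₀, κ, fun d hd hdd₀ => ?_⟩
  obtain ⟨hle, -, hd1⟩ := hsub ⟨hd, hdd₀⟩
  rw [Real.norm_eq_abs, Real.norm_eq_abs, abs_of_nonneg (sq_nonneg d)] at hle
  calc _ ≤ κ * d ^ 2 := hle
    _ = κ * d ^ (2 : ℝ) := by rw [rpow_two]
    _ ≤ κ * d ^ (2 - ε) :=
        mul_le_mul_of_nonneg_left (rpow_le_rpow_of_exponent_ge hd hd1.le (by linarith)) hκ.le
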